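/- For all W, V ∈ 𝔹, the norm |W|_𝔹 = sqrt(|Sc W|² + |Vec W|²) satisfies the submultiplicativity-type inequality |WV|_𝔹 ≤ √2 · |W|_𝔹 · |V|_𝔹. -/

import Mathlib

noncomputable section

@[ext] structure Bicomplex : Type where
  sc : ℂ
  vec : ℂ

namespace Bicomplex

instance : Zero Bicomplex := ⟨⟨0, 0⟩⟩
instance : One Bicomplex := ⟨⟨1, 0⟩⟩
instance : Add Bicomplex := ⟨fun W V => ⟨W.sc + V.sc, W.vec + V.vec⟩⟩
instance : Neg Bicomplex := ⟨fun W => ⟨-W.sc, -W.vec⟩⟩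
instance : Mul Bicomplex :=
  ⟨fun W V => ⟨W.sc * V.sc - W.vec * V.vec, W.sc * V.vec + W.vec * V.sc⟩⟩

@[simp] lemma zero_sc : (0 : Bicomplex).sc = 0 := rfl
@[simp] lemma zero_vec : (0 : Bicomplex).vec = 0 := rfl
@[simp] lemma one_sc : (1 : Bicomplex).sc = 1 := rfl
@[simp] lemma one_vec : (1 : Bicomplex).vec = 0 := rfl
@[simp] lemma add_sc (W V : Bicomplex) : (W + V).sc = W.sc + V.sc := rfl
@[simp] lemma add_vec (W V : Bicomplex) : (W + V).vec = W.vec + V.vec := rfl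
@[simp] lemma neg_sc (W : Bicomplex) : (-W).sc = -W.sc := rfl
@[simp] lemma neg_vec (W : Bicomplex) : (-W).vec = -W.vec := rfl
@[simp] lemma mul_sc (W V : Bicomplex) : (W * V).sc = W.sc * V.sc - W.vec * V.vec := rfl
@[simp] lemma mul_vec (W V : Bicomplex) : (W * V).vec = W.sc * V.vec + W.vec * V.sc := rfl

instance : CommRing Bicomplex where
  add_assoc a b c := by ext <;> simp <;> ring
  zero_add a := by ext <;> simp
  add_zero a := by ext <;> simp
  add_comm a b := by ext <;> simp <;> ring
  mul_assoc a b c := by ext <;> simp <;> ring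
  one_mul a := by ext <;> simp
  mul_one a := by ext <;> simp
  left_distrib a b c := by ext <;> simp <;> ring
  right_distrib a b c := by ext <;> simp <;> ring
  mul_comm a b := by ext <;> simp <;> ring
  zero_mul a := by ext <;> simp
  mul_zero a := by ext <;> simp
  neg_add_cancel a := by ext <;> simp
  nsmul := nsmulRec
  zsmul := zsmulRec

/-- The canonical embedding of `ℂ` into the bicomplex numbers. -/
def oc (z : ℂ) : Bicomplex := ⟨z, 0⟩

/-- The second imaginary unit `j`. -/
def jay : Bicomplex := ⟨0, 1⟩

/-- The bicomplex conjugation `conj (u + jv) = u - jv`. -/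
def bconj (W : Bicomplex) : Bicomplex := ⟨W.sc, -W.vec⟩

/-- The idempotent `p⁺ = (1 + ij)/2`. -/
def pp : Bicomplex := ⟨1/2, Complex.I/2⟩

/-- The idempotent `p⁻ = (1 - ij)/2`. -/
def pm : Bicomplex := ⟨1/2, -(Complex.I/2)⟩

/-- The idempotent component `W⁺ = Sc W - i Vec W`. -/
def plus (W : Bicomplex) : ℂ := W.sc - Complex.I * W.vec

/-- The idempotent component `W⁻ = Sc W + i Vec W`. -/
def minus (W : Bicomplex) : ℂ := W.sc + Complex.I * W.vec

/-- The involution `W† = p⁺ (W⁺)* + p⁻ (W⁻)*`. -/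
def dag (W : Bicomplex) : Bicomplex :=
  pp * oc ((starRingEnd ℂ) (plus W)) + pm * oc ((starRingEnd ℂ) (minus W))

/-- The complex inner product `⟨W,V⟩_𝔹 = Sc (W V†)`. -/
def binner (W V : Bicomplex) : ℂ := (W * dag V).sc

/-- The norm `|W|_𝔹 = sqrt (|Sc W|² + |Vec W|²)`. -/
def bnorm (W : Bicomplex) : ℝ :=
  Real.sqrt (‖W.sc‖ ^ 2 + ‖W.vec‖ ^ 2)

/-- The bicomplex exponential `e^W = p⁺ e^{W⁺} + p⁻ e^{W⁻}`. -/
def bexp (W : Bicomplex) : Bicomplex :=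
  pp * oc (Complex.exp (plus W)) + pm * oc (Complex.exp (minus W))

/-- For `z = x + iy ∈ ℂ`, the bicomplex number `ẑ = x + jy`. -/
def hat (z : ℂ) : Bicomplex := ⟨(z.re : ℂ), (z.im : ℂ)⟩

end Bicomplex

/-!
Writing `W = p⁺ W⁺ + p⁻ W⁻`, the components `W ↦ W⁺` and `W ↦ W⁻` are multiplicative and, by the
parallelogram law, `2 |W|_𝔹² = |W⁺|² + |W⁻|²`. Hence
`2 |WV|_𝔹² = |W⁺|²|V⁺|² + |W⁻|²|V⁻|² ≤ (|W⁺|² + |W⁻|²)(|V⁺|² + |V⁻|²) = 4 |W|_𝔹² |V|_𝔹²`.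
-/

namespace Bicomplex

lemma bnorm_nonneg (W : Bicomplex) : 0 ≤ bnorm W := Real.sqrt_nonneg _

lemma sq_bnorm (W : Bicomplex) : bnorm W ^ 2 = ‖W.sc‖ ^ 2 + ‖W.vec‖ ^ 2 :=
  Real.sq_sqrt (by positivity)

lemma plus_mul (W V : Bicomplex) : plus (W * V) = plus W * plus V := by
  simp only [plus, mul_sc, mul_vec]
  linear_combination (-(W.vec * V.vec)) * Complex.I_sq

lemma minus_mul (W V : Bicomplex) : minus (W * V) = minus W * minus V := by
  simp only [minus, mul_sc, mul_vec]
  linear_combination (-(W.vec * V.vec)) * Complex.I_sq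

lemma two_mul_sq_bnorm (W : Bicomplex) : 2 * bnorm W ^ 2 = ‖plus W‖ ^ 2 + ‖minus W‖ ^ 2 := by
  have h := parallelogram_law_with_norm ℝ W.sc (Complex.I * W.vec)
  rw [norm_mul, Complex.norm_I, one_mul] at h
  rw [sq_bnorm, plus, minus]
  linarith

lemma sq_bnorm_mul_le (W V : Bicomplex) : bnorm (W * V) ^ 2 ≤ 2 * bnorm W ^ 2 * bnorm V ^ 2 := by
  have hW := two_mul_sq_bnorm W
  have hV := two_mul_sq_bnorm V
  have hWV := two_mul_sq_bnorm (W * V)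
  rw [plus_mul, minus_mul, norm_mul, norm_mul, mul_pow, mul_pow] at hWV
  nlinarith [mul_nonneg (sq_nonneg ‖plus W‖) (sq_nonneg ‖minus V‖),
    mul_nonneg (sq_nonneg ‖minus W‖) (sq_nonneg ‖plus V‖)]

end Bicomplex

/-- `|WV|_𝔹 ≤ √2 |W|_𝔹 |V|_𝔹`. -/
theorem bicomplex_bnorm_mul_le (W V : Bicomplex) :
    Bicomplex.bnorm (W * V) ≤ Real.sqrt 2 * Bicomplex.bnorm W * Bicomplex.bnorm V := by
  open Bicomplex in
  calc bnorm (W * V) = Real.sqrt (bnorm (W * V) ^ 2) := (Real.sqrt_sq (bnorm_nonneg _)).symm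
    _ ≤ Real.sqrt (2 * bnorm W ^ 2 * bnorm V ^ 2) := Real.sqrt_le_sqrt (sq_bnorm_mul_le W V)
    _ = Real.sqrt 2 * bnorm W * bnorm V := by
      rw [Real.sqrt_mul (by positivity), Real.sqrt_mul (by norm_num),
        Real.sqrt_sq (bnorm_nonneg W), Real.sqrt_sq (bnorm_nonneg V)]
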